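/- Let C_axis ∈ ℂ^{m×m×m} be the axis core tensor and let X ∈ ℂ^{m×m} be an invertible matrix with [[C_axis; X, X, X]] = C_axis. If the standard basis vector e_m = (0,…,0,1)ᵀ is an eigenvector of X, then e_m is also an eigenvector of the transpose Xᵀ. -/

import Mathlib

/-!
Let `M` be the last index and `r` the row `M` of `X`. Read at first index `M`, the stabilizer
identity says `X A Xᵀ = E_MM / 6` with `A_jk = ∑ᵢ c_ijk rᵢ`, because the slice `c_M··` vanishes
off `(M, M)`. Since `X eₘ = μ eₘ` with `μ ≠ 0`, also `X (E_MM / 6μ²) Xᵀ = E_MM / 6`, so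
`A = E_MM / 6μ²` by invertibility. For `j < M` the diagonal entries
`A_jj = ∑_{i<j} rᵢ / 2 + r_j / 6` therefore vanish: a triangular system forcing `r_j = 0`.
Hence `Xᵀ eₘ = r = X_MM eₘ`.
-/

open Matrix

/-- The axis core tensor. -/
noncomputable def caxis (𝕂 : Type*) [DivisionRing 𝕂] (m : ℕ) :
    Fin m → Fin m → Fin m → 𝕂 := fun i j k =>
  if i < j ∧ j < k then 1
  else if (i < j ∧ j = k) ∨ (i = j ∧ j < k) then 1 / 2
  else if i = j ∧ j = k then 1 / 6
  else 0

/-- The congruence action on an `m × m × m` tensor. -/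
def congrAct3 {𝕂 : Type*} [CommRing 𝕂] {m : ℕ} (C : Fin m → Fin m → Fin m → 𝕂)
    (X : Matrix (Fin m) (Fin m) 𝕂) : Fin m → Fin m → Fin m → 𝕂 :=
  fun α β γ => ∑ i, ∑ j, ∑ k, C i j k * X α i * X β j * X γ k

/-- The last standard basis vector `e_m` of `𝕂^m`. -/
def lastBasis (𝕂 : Type*) [Semiring 𝕂] (m : ℕ) [NeZero m] : Fin m → 𝕂 :=
  Pi.single ⟨m - 1, Nat.sub_lt (Nat.pos_of_neZero m) Nat.one_pos⟩ 1

variable {𝕂 : Type*} {m : ℕ}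

def contractFirst [CommRing 𝕂] (C : Fin m → Fin m → Fin m → 𝕂) (v : Fin m → 𝕂) :
    Matrix (Fin m) (Fin m) 𝕂 :=
  of fun j k => ∑ i, C i j k * v i

theorem congrAct3_apply [CommRing 𝕂] (C : Fin m → Fin m → Fin m → 𝕂)
    (X : Matrix (Fin m) (Fin m) 𝕂) (α β γ : Fin m) :
    congrAct3 C X α β γ = (X * contractFirst C (X α) * Xᵀ) β γ := by
  simp only [congrAct3, contractFirst, mul_apply, of_apply, transpose_apply, Finset.sum_mul,
    Finset.mul_sum]
  rw [Finset.sum_comm]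
  conv_rhs => rw [Finset.sum_comm]
  refine Finset.sum_congr rfl fun j _ => ?_
  rw [Finset.sum_comm]
  refine Finset.sum_congr rfl fun k _ => Finset.sum_congr rfl fun i _ => by ring

section caxis

variable [DivisionRing 𝕂] {i j k M : Fin m}

theorem caxis_apply_of_lt (h : j < i) : caxis 𝕂 m i j k = 0 := by
  simp [caxis, h.not_gt, h.ne']

theorem caxis_apply_self : caxis 𝕂 m i i i = 1 / 6 := by
  simp [caxis]

theorem of_caxis_of_isTop (hM : IsTop M) : of (caxis 𝕂 m M) = single M M (1 / 6) := by
  ext β γ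
  have := hM β
  have := hM γ
  simp only [of_apply, single_apply, caxis]
  grind

end caxis

theorem eq_zero_of_contractFirst_caxis_diag_eq_zero [Field 𝕂] (h6 : (6 : 𝕂) ≠ 0)
    {r : Fin m → 𝕂} {N : Fin m} (h : ∀ j < N, contractFirst (caxis 𝕂 m) r j j = 0) :
    ∀ j < N, r j = 0 := by
  intro j
  induction j using WellFoundedLT.induction with
  | _ j ih =>
    intro hj
    have hdiag : contractFirst (caxis 𝕂 m) r j j = 1 / 6 * r j := by
      rw [contractFirst, of_apply, Finset.sum_eq_single j, caxis_apply_self]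
      · intro i _ hij
        rcases lt_or_gt_of_ne hij with hlt | hgt
        · rw [ih i hlt (hlt.trans hj), mul_zero]
        · rw [caxis_apply_of_lt hgt, zero_mul]
      · simp
    simpa [h6] using hdiag.symm.trans (h j hj)

section eigenvector

variable {X : Matrix (Fin m) (Fin m) 𝕂} {M : Fin m} {μ : 𝕂}

theorem mul_single_mul_transpose_of_mulVec_single [CommRing 𝕂]
    (hev : X *ᵥ Pi.single M 1 = μ • Pi.single M 1) (c : 𝕂) :
    X * single M M c * Xᵀ = single M M (μ * c * μ) := by
  have hcol (α : Fin m) : X α M = if α = M then μ else 0 := by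
    simpa [Pi.single_apply] using congrFun hev α
  ext β γ
  simp only [mul_apply, single_apply, ite_and, mul_ite, mul_zero, Finset.sum_ite_eq,
    Finset.mem_univ, if_true, hcol, ite_mul, zero_mul, transpose_apply]
  grind

theorem ne_zero_of_mulVec_single_eq_smul [Field 𝕂]
    (hX : IsUnit X) (hev : X *ᵥ Pi.single M 1 = μ • Pi.single M 1) : μ ≠ 0 := by
  rintro rfl
  have hzero : X *ᵥ Pi.single M 1 = X *ᵥ 0 := by rw [hev, zero_smul, mulVec_zero]
  simpa using congrFun (mulVec_injective_iff_isUnit.2 hX hzero) M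

theorem contractFirst_caxis_row_of_isTop [Field 𝕂] (hM : IsTop M) (hX : IsUnit X)
    (hstab : congrAct3 (caxis 𝕂 m) X = caxis 𝕂 m) (hev : X *ᵥ Pi.single M 1 = μ • Pi.single M 1) :
    contractFirst (caxis 𝕂 m) (X M) = single M M (1 / 6 / (μ * μ)) := by
  have hμ := ne_zero_of_mulVec_single_eq_smul hX hev
  have hconj :
      X * contractFirst (caxis 𝕂 m) (X M) * Xᵀ = X * single M M (1 / 6 / (μ * μ)) * Xᵀ := by
    rw [mul_single_mul_transpose_of_mulVec_single hev, show μ * (1 / 6 / (μ * μ)) * μ = 1 / 6 by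
      field_simp, ← of_caxis_of_isTop hM]
    ext β γ
    rw [of_apply, ← congrAct3_apply, hstab]
  rw [Matrix.mul_assoc, Matrix.mul_assoc] at hconj
  exact ((isUnit_transpose X).2 hX).mul_right_cancel (hX.mul_left_cancel hconj)

end eigenvector

/-- If an invertible matrix `X` stabilizes the axis core tensor under congruence
and `e_m` is an eigenvector of `X`, then `e_m` is also an eigenvector of `Xᵀ`. -/
theorem transpose_eigenvector_of_axis_stabilizer (m : ℕ) [NeZero m]
    (X : Matrix (Fin m) (Fin m) ℂ) (hX : IsUnit X)
    (hstab : congrAct3 (caxis ℂ m) X = caxis ℂ m)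
    (hev : ∃ μ : ℂ, X.mulVec (lastBasis ℂ m) = μ • lastBasis ℂ m) :
    ∃ ν : ℂ, Xᵀ.mulVec (lastBasis ℂ m) = ν • lastBasis ℂ m := by
  obtain ⟨μ, hev⟩ := hev
  set M : Fin m := ⟨m - 1, Nat.sub_lt (Nat.pos_of_neZero m) Nat.one_pos⟩
  have hlast : lastBasis ℂ m = Pi.single M 1 := rfl
  rw [hlast] at hev ⊢
  have hM : IsTop M := fun j => Nat.le_pred_of_lt j.isLt
  have hrow := contractFirst_caxis_row_of_isTop hM hX hstab hev
  have hrow_zero : ∀ j < M, X M j = 0 :=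
    eq_zero_of_contractFirst_caxis_diag_eq_zero (by norm_num) fun j hj => by
      simp [hrow, hj.ne']
  refine ⟨X M M, funext fun j => ?_⟩
  rw [mulVec_single_one]
  rcases (hM j).lt_or_eq with hj | rfl
  · simp [hrow_zero j hj, hj.ne]
  · simp
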